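/- Let n ≥ 2, let Ω ⊆ ℝⁿ be an open connected set, and let f : Ω → ℝˡ. Then f is strongly 0-absolutely continuous if and only if f is constant on Ω. -/

import Mathlib

/-!
A box two of whose corners share a coordinate is Lebesgue-null, so strong 0-absolute continuity,
tested on that single box, forces `f` to agree at the two corners. For `n ≥ 2`, two points that
differ in one coordinate only are such corners (the box is flat in another coordinate), so `f`
is constant along coordinate staircases. Every point of a small ball around `c` is joined to `c`
by a staircase inside the ball, so `f` is locally constant on `Ω`, hence constant since `Ω` is
connected.
-/

open MeasureTheory Metric Set Filter

noncomputable section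

/-- The closed interval (box) `[a,b]` in `ℝⁿ`. -/
def box {n : ℕ} (a b : EuclideanSpace ℝ (Fin n)) : Set (EuclideanSpace ℝ (Fin n)) :=
  {x | ∀ ν, a ν ≤ x ν ∧ x ν ≤ b ν}

/-- `f` is strongly 0-absolutely continuous on `Ω`: for every `ε > 0` there is `δ > 0` such
that for every finite collection of pairwise disjoint intervals `[aᵢ,bᵢ] ⊆ Ω`,
`∑ ℒⁿ([aᵢ,bᵢ]) < δ` implies `∑ |f(bᵢ) - f(aᵢ)|ⁿ < ε`. -/
def Strong0AC {n l : ℕ} (f : EuclideanSpace ℝ (Fin n) → EuclideanSpace ℝ (Fin l))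
    (Ω : Set (EuclideanSpace ℝ (Fin n))) : Prop :=
  ∀ ε > 0, ∃ δ > 0, ∀ (k : ℕ) (a b : Fin k → EuclideanSpace ℝ (Fin n)),
    (∀ i, ∀ ν, a i ν ≤ b i ν) →
    (∀ i, box (a i) (b i) ⊆ Ω) →
    (Pairwise fun i j => Disjoint (box (a i) (b i)) (box (a j) (b j))) →
    ∑ i, (volume (box (a i) (b i))).toReal < δ →
    ∑ i, ‖f (b i) - f (a i)‖ ^ n < ε

open Topology

variable {n l : ℕ}

def uBox (x y : EuclideanSpace ℝ (Fin n)) : Set (EuclideanSpace ℝ (Fin n)) :=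
  {w | ∀ ν, w ν ∈ uIcc (x ν) (y ν)}

lemma uBox_comm (x y : EuclideanSpace ℝ (Fin n)) : uBox x y = uBox y x := by
  simp only [uBox, uIcc_comm]

lemma uBox_eq_box {a b : EuclideanSpace ℝ (Fin n)} (hab : ∀ ν, a ν ≤ b ν) :
    uBox a b = box a b := by
  ext w
  simp only [uBox, box, mem_ofPred_eq, uIcc_of_le (hab _), mem_Icc]

lemma volume_box (a b : EuclideanSpace ℝ (Fin n)) :
    volume (box a b) = ∏ ν, ENNReal.ofReal (b ν - a ν) := by
  have : box a b = WithLp.ofLp ⁻¹' Icc (WithLp.ofLp a) (WithLp.ofLp b) := by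
    ext w; simp [box, Pi.le_def, forall_and]
  rw [this, (PiLp.volume_preserving_ofLp _).measure_preimage measurableSet_Icc.nullMeasurableSet,
    Real.volume_Icc_pi]

lemma volume_box_eq_zero {a b : EuclideanSpace ℝ (Fin n)} {ν : Fin n} (h : a ν = b ν) :
    volume (box a b) = 0 := by
  rw [volume_box]
  exact Finset.prod_eq_zero (Finset.mem_univ ν) (by simp [h])

lemma dist_le_of_mem_uBox {c x w : EuclideanSpace ℝ (Fin n)} (hw : w ∈ uBox c x) :
    dist w c ≤ dist x c := by
  rw [EuclideanSpace.dist_eq, EuclideanSpace.dist_eq]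
  gcongr with ν
  simpa only [Real.dist_eq] using abs_sub_left_of_mem_uIcc (hw ν)

lemma eventually_uBox_subset {Ω : Set (EuclideanSpace ℝ (Fin n))} {c : EuclideanSpace ℝ (Fin n)}
    (hΩ : Ω ∈ 𝓝 c) : ∀ᶠ x in 𝓝 c, uBox c x ⊆ Ω := by
  obtain ⟨r, hr, hball⟩ := Metric.mem_nhds_iff.mp hΩ
  filter_upwards [ball_mem_nhds c hr] with x hx w hw
  exact hball ((dist_le_of_mem_uBox hw).trans_lt hx)

lemma uBox_subset_uBox {x y x' y' : EuclideanSpace ℝ (Fin n)} (hx : x' ∈ uBox x y)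
    (hy : y' ∈ uBox x y) : uBox x' y' ⊆ uBox x y :=
  fun _ hw ν ↦ uIcc_subset_uIcc (hx ν) (hy ν) (hw ν)

def stair (x y : EuclideanSpace ℝ (Fin n)) (k : ℕ) : EuclideanSpace ℝ (Fin n) :=
  WithLp.toLp 2 fun ν ↦ if (ν : ℕ) < k then y ν else x ν

lemma stair_zero (x y : EuclideanSpace ℝ (Fin n)) : stair x y 0 = x := by
  ext ν; simp [stair]

lemma stair_of_le (x y : EuclideanSpace ℝ (Fin n)) {k : ℕ} (hk : n ≤ k) : stair x y k = y := by
  ext ν; simp [stair, ν.isLt.trans_le hk]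

lemma stair_mem_uBox (x y : EuclideanSpace ℝ (Fin n)) (k : ℕ) : stair x y k ∈ uBox x y := by
  intro ν
  by_cases h : (ν : ℕ) < k <;> simp [stair, h]

lemma stair_succ_apply_of_ne (x y : EuclideanSpace ℝ (Fin n)) {k : ℕ} {ν : Fin n}
    (hν : (ν : ℕ) ≠ k) : stair x y (k + 1) ν = stair x y k ν := by
  simp only [stair, Nat.lt_succ_iff_lt_or_eq, hν, or_false]

namespace Strong0AC

variable {f : EuclideanSpace ℝ (Fin n) → EuclideanSpace ℝ (Fin l)}
  {Ω : Set (EuclideanSpace ℝ (Fin n))}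

lemma eq_of_volume_box_eq_zero (hn : n ≠ 0) (hf : Strong0AC f Ω)
    {a b : EuclideanSpace ℝ (Fin n)} (hab : ∀ ν, a ν ≤ b ν) (hsub : box a b ⊆ Ω)
    (hvol : volume (box a b) = 0) : f a = f b := by
  have hsmall : ∀ ε > 0, ‖f b - f a‖ ^ n < ε := fun ε hε ↦ by
    obtain ⟨δ, hδ, H⟩ := hf ε hε
    simpa using H 1 (fun _ ↦ a) (fun _ ↦ b) (fun _ ↦ hab) (fun _ ↦ hsub)
      (fun i j hij ↦ absurd (Subsingleton.elim i j) hij) (by simpa [hvol] using hδ)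
  have hzero : ‖f b - f a‖ ^ n = 0 :=
    le_antisymm (le_of_forall_pos_lt_add fun ε hε ↦ by simpa using hsmall ε hε) (by positivity)
  rw [pow_eq_zero_iff hn, norm_eq_zero, sub_eq_zero] at hzero
  exact hzero.symm

lemma eq_of_forall_ne_apply_eq (hn : 2 ≤ n) (hf : Strong0AC f Ω)
    {x y : EuclideanSpace ℝ (Fin n)} {j : Fin n} (hxy : ∀ ν ≠ j, x ν = y ν)
    (hsub : uBox x y ⊆ Ω) : f x = f y := by
  wlog hle : x j ≤ y j generalizing x y
  · exact (this (fun ν hν ↦ (hxy ν hν).symm) (uBox_comm x y ▸ hsub) (le_of_not_ge hle)).symm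
  have hab : ∀ ν, x ν ≤ y ν := fun ν ↦ by
    rcases eq_or_ne ν j with rfl | hν
    exacts [hle, (hxy ν hν).le]
  have : Nontrivial (Fin n) := Fin.nontrivial_iff_two_le.mpr hn
  obtain ⟨ν, hν⟩ := exists_ne j
  exact eq_of_volume_box_eq_zero (by omega) hf hab (uBox_eq_box hab ▸ hsub)
    (volume_box_eq_zero (hxy ν hν))

lemma eq_of_uBox_subset (hn : 2 ≤ n) (hf : Strong0AC f Ω) {x y : EuclideanSpace ℝ (Fin n)}
    (hsub : uBox x y ⊆ Ω) : f x = f y := by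
  have hstep : ∀ k < n, f (stair x y k) = f (stair x y (k + 1)) := fun k hk ↦
    hf.eq_of_forall_ne_apply_eq hn (j := ⟨k, hk⟩)
      (fun ν hν ↦ (stair_succ_apply_of_ne x y (Fin.val_ne_of_ne hν)).symm)
      ((uBox_subset_uBox (stair_mem_uBox x y k) (stair_mem_uBox x y (k + 1))).trans hsub)
  have hchain : ∀ k ≤ n, f x = f (stair x y k) := by
    intro k hk
    induction k with
    | zero => rw [stair_zero]
    | succ k ih => rw [ih (by omega), hstep k (by omega)]
  rw [hchain n le_rfl, stair_of_le x y le_rfl]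

lemma eq_of_isPreconnected (hn : 2 ≤ n) (hf : Strong0AC f Ω) (hΩ : IsOpen Ω)
    (hΩc : IsPreconnected Ω) {x y : EuclideanSpace ℝ (Fin n)} (hx : x ∈ Ω) (hy : y ∈ Ω) :
    f x = f y := by
  refine hΩc.induction₂ (fun x y ↦ f x = f y) (fun c hc ↦ ?_) (fun _ _ _ _ _ _ ↦ Eq.trans)
    (fun _ _ _ _ ↦ Eq.symm) hx hy
  filter_upwards [nhdsWithin_le_nhds (eventually_uBox_subset (hΩ.mem_nhds hc))] with x hx
  exact hf.eq_of_uBox_subset hn hx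

lemma of_forall_eq (hn : n ≠ 0) (h : ∀ x ∈ Ω, ∀ y ∈ Ω, f x = f y) : Strong0AC f Ω := by
  intro ε hε
  refine ⟨1, one_pos, fun k a b hab hsub _ _ ↦ ?_⟩
  have hmem : ∀ i, a i ∈ Ω ∧ b i ∈ Ω := fun i ↦
    ⟨hsub i fun ν ↦ ⟨le_rfl, hab i ν⟩, hsub i fun ν ↦ ⟨hab i ν, le_rfl⟩⟩
  simpa [fun i ↦ h _ (hmem i).2 _ (hmem i).1, zero_pow hn] using hε

end Strong0AC

/-- For `n ≥ 2`, an open connected `Ω ⊆ ℝⁿ` and `f : Ω → ℝˡ`, `f` is strongly 0-absolutely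
continuous if and only if `f` is constant on `Ω`. -/
theorem strong0AC_iff_constant {n l : ℕ} (hn : 2 ≤ n)
    (Ω : Set (EuclideanSpace ℝ (Fin n))) (hΩopen : IsOpen Ω) (hΩconn : IsConnected Ω)
    (f : EuclideanSpace ℝ (Fin n) → EuclideanSpace ℝ (Fin l)) :
    Strong0AC f Ω ↔ ∀ x ∈ Ω, ∀ y ∈ Ω, f x = f y :=
  ⟨fun hf _ hx _ hy ↦ hf.eq_of_isPreconnected hn hΩopen hΩconn.isPreconnected hx hy,
    Strong0AC.of_forall_eq (by omega)⟩
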